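/- arXiv:1608.05495 — 3 statements merged into one kernel-verified Lean document; each statement's English description precedes it below -/
import Mathlib

section
/- For any connected graph G, the fractional strong metric dimension of G is at least the matching number of the strong resolving graph of G: sdim_f(G) ≥ ν(G_SR). -/
open SimpleGraph

/-- `Sset G x y` is the set `S{x,y}` of vertices `z` such that `x` lies on some shortest
`y`–`z` path or `y` lies on some shortest `x`–`z` path in `G`. -/
def Sset {V : Type*} (G : SimpleGraph V) (x y : V) : Set V :=
  {z | (∃ p : G.Walk y z, p.length = G.dist y z ∧ x ∈ p.support) ∨
       (∃ p : G.Walk x z, p.length = G.dist x z ∧ y ∈ p.support)}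

/-- A strong resolving function of `G`: `g : V → [0,1]` with `g(S{x,y}) ≥ 1` for all
distinct vertices `x, y`. -/
def IsSRF {V : Type*} (G : SimpleGraph V) (g : V → ℝ) : Prop :=
  (∀ v, 0 ≤ g v ∧ g v ≤ 1) ∧ ∀ x y : V, x ≠ y → 1 ≤ ∑ᶠ z ∈ Sset G x y, g z

/-- The fractional strong metric dimension of `G`. -/
noncomputable def sdimf {V : Type*} (G : SimpleGraph V) : ℝ :=
  sInf {s : ℝ | ∃ g : V → ℝ, IsSRF G g ∧ s = ∑ᶠ v, g v}

/-- A strong resolving set of `G`: every pair of distinct vertices is strongly resolved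
by some vertex of `S` (i.e. some vertex of `S` lies in `S{x,y}`). -/
def IsSRSet {V : Type*} (G : SimpleGraph V) (S : Set V) : Prop :=
  ∀ x y : V, x ≠ y → ∃ z ∈ S, z ∈ Sset G x y

/-- The strong metric dimension of `G`: the minimum cardinality of a strong resolving set. -/
noncomputable def sdim {V : Type*} (G : SimpleGraph V) : ℕ :=
  sInf {n : ℕ | ∃ S : Set V, IsSRSet G S ∧ S.ncard = n}

/-- `u` is maximally distant from `v`: `d(u,v) ≥ d(w,v)` for every neighbor `w` of `u`. -/
def MaxDistFrom {V : Type*} (G : SimpleGraph V) (u v : V) : Prop :=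
  ∀ w : V, G.Adj u w → G.dist w v ≤ G.dist u v

/-- `u` and `v` are mutually maximally distant (MMD) in `G`. -/
def MMD {V : Type*} (G : SimpleGraph V) (u v : V) : Prop :=
  u ≠ v ∧ MaxDistFrom G u v ∧ MaxDistFrom G v u

/-- The strong resolving graph of `G` (on the ambient vertex set): `u ~ v` iff `u` MMD `v`. -/
def SRGraph {V : Type*} (G : SimpleGraph V) : SimpleGraph V where
  Adj := MMD G
  symm := ⟨fun _ _ h => ⟨h.1.symm, h.2.2, h.2.1⟩⟩
  loopless := ⟨fun _ h => h.1 rfl⟩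

/-- `M(G)`: the set of vertices that are mutually maximally distant with some vertex. -/
def Mset {V : Type*} (G : SimpleGraph V) : Set V := {x | ∃ y, MMD G x y}

/-- The matching number of `G`. -/
noncomputable def matchNum {V : Type*} (G : SimpleGraph V) : ℕ :=
  sSup {n : ℕ | ∃ M : G.Subgraph, M.IsMatching ∧ M.edgeSet.ncard = n}

/-- The corona product `G ⊙ H`. -/
def corona {V W : Type*} (G : SimpleGraph V) (H : SimpleGraph W) :
    SimpleGraph (V ⊕ V × W) where
  Adj x y :=
    match x, y with
    | Sum.inl u, Sum.inl u' => G.Adj u u'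
    | Sum.inl u, Sum.inr iw => u = iw.1
    | Sum.inr iw, Sum.inl u => iw.1 = u
    | Sum.inr iw, Sum.inr iw' => iw.1 = iw'.1 ∧ H.Adj iw.2 iw'.2
  symm := by
    constructor
    rintro (u | iw) (u' | iw') h
    · exact G.adj_symm h
    · exact h.symm
    · exact h.symm
    · exact ⟨h.1.symm, H.adj_symm h.2⟩
  loopless := by
    constructor
    rintro (u | iw) h
    · exact G.irrefl h
    · exact H.irrefl h.2

/-- `K₁ ⊙ H`: the graph obtained from `H` by adding one new vertex adjacent to every
vertex of `H`. -/
def cone {W : Type*} (H : SimpleGraph W) : SimpleGraph (Option W) where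
  Adj x y :=
    match x, y with
    | none, none => False
    | none, some _ => True
    | some _, none => True
    | some w, some w' => H.Adj w w'
  symm := by
    constructor
    rintro (_ | w) (_ | w') h
    · exact h
    · exact trivial
    · exact trivial
    · exact H.adj_symm h
  loopless := by
    constructor
    rintro (_ | w) h
    · exact h
    · exact H.irrefl h

/-- The lexicographic product `G[H]`. -/
def lexProd {V W : Type*} (G : SimpleGraph V) (H : SimpleGraph W) :
    SimpleGraph (V × W) where
  Adj x y := G.Adj x.1 y.1 ∨ (x.1 = y.1 ∧ H.Adj x.2 y.2)
  symm := by
    constructor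
    rintro x y (h | ⟨h1, h2⟩)
    · exact Or.inl (G.adj_symm h)
    · exact Or.inr ⟨h1.symm, H.adj_symm h2⟩
  loopless := by
    constructor
    rintro x (h | ⟨_, h2⟩)
    · exact G.irrefl h
    · exact H.irrefl h2

/-- `SL{x,y} = (N[x] ∪ N[y]) ∩ S{x,y}`. -/
def SLset {W : Type*} (H : SimpleGraph W) (x y : W) : Set W :=
  (insert x (H.neighborSet x) ∪ insert y (H.neighborSet y)) ∩ Sset H x y

/-- A strong locating function of `H`. -/
def IsSLF {W : Type*} (H : SimpleGraph W) (f : W → ℝ) : Prop :=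
  (∀ v, 0 ≤ f v ∧ f v ≤ 1) ∧ ∀ x y : W, x ≠ y → 1 ≤ ∑ᶠ z ∈ SLset H x y, f z

/-- `sl_f(H)`: the minimum weight of a strong locating function of `H`. -/
noncomputable def slf {W : Type*} (H : SimpleGraph W) : ℝ :=
  sInf {s : ℝ | ∃ f : W → ℝ, IsSLF H f ∧ s = ∑ᶠ v, f v}

/-- `u` has a true twin: some other vertex with the same closed neighborhood. -/
def HasTrueTwin {V : Type*} (G : SimpleGraph V) (u : V) : Prop :=
  ∃ v : V, v ≠ u ∧ insert v (G.neighborSet v) = insert u (G.neighborSet u)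

/-- `u` has a false twin: some other vertex with the same open neighborhood. -/
def HasFalseTwin {V : Type*} (G : SimpleGraph V) (u : V) : Prop :=
  ∃ v : V, v ≠ u ∧ G.neighborSet v = G.neighborSet u

/-- `m₁(G)`: number of vertices in type-1 (singleton) classes of the twin relation. -/
noncomputable def m1 {V : Type*} (G : SimpleGraph V) : ℕ :=
  {u : V | ¬ HasTrueTwin G u ∧ ¬ HasFalseTwin G u}.ncard

/-- `m₂(G)`: number of vertices in type-2 (clique) classes of the twin relation. -/
noncomputable def m2 {V : Type*} (G : SimpleGraph V) : ℕ :=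
  {u : V | HasTrueTwin G u}.ncard

/-- `m₃(G)`: number of vertices in type-3 (independent set) classes of the twin relation. -/
noncomputable def m3 {V : Type*} (G : SimpleGraph V) : ℕ :=
  {u : V | HasFalseTwin G u}.ncard

/-- The strong resolving graph of `G` (whose vertex set is `M(G)`) is Hamiltonian:
there is a cycle in `SRGraph G` passing through every vertex of `M(G)`. -/
def SRHamiltonian {V : Type*} (G : SimpleGraph V) : Prop :=
  ∃ (u : V) (p : (SRGraph G).Walk u u), p.IsCycle ∧ ∀ v ∈ Mset G, v ∈ p.support

/-! If `u` and `v` are mutually maximally distant, no geodesic from one of them can pass through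
the other and continue, so `S{u,v} = {u,v}`. Hence a strong resolving function puts weight at
least `1` on the two ends of every edge of `G_SR`, i.e. it is a fractional vertex cover of `G_SR`,
and summing over the disjoint edges of a maximum matching gives the bound. -/

namespace SimpleGraph

variable {V : Type*} {G : SimpleGraph V} {u v x y z : V}

lemma MaxDistFrom.eq_of_mem_support (hmax : MaxDistFrom G u v) (p : G.Walk v z)
    (hp : p.length = G.dist v z) (hu : u ∈ p.support) : z = u := by
  obtain ⟨q, r, rfl⟩ := Walk.mem_support_iff_exists_append.mp hu
  cases r with
  | nil => rfl
  | @cons _ w _ hadj r =>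
    exfalso
    have hq : G.dist v u ≤ q.length := dist_le q
    have hr : G.dist w z ≤ r.length := dist_le r
    have htri : G.dist v z ≤ G.dist v w + G.dist w z := r.reachable.dist_triangle_right v
    have hw : G.dist v w ≤ G.dist v u := by
      simpa only [dist_comm (v := v)] using hmax w hadj
    rw [Walk.length_append, Walk.length_cons] at hp
    omega

lemma left_mem_Sset (h : G.Reachable y x) : x ∈ Sset G x y :=
  let ⟨p, hp⟩ := h.exists_walk_length_eq_dist
  Or.inl ⟨p, hp, p.end_mem_support⟩

lemma right_mem_Sset (h : G.Reachable x y) : y ∈ Sset G x y :=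
  let ⟨p, hp⟩ := h.exists_walk_length_eq_dist
  Or.inr ⟨p, hp, p.end_mem_support⟩

lemma Sset_eq_pair_of_MMD (h : MMD G u v) (hr : G.Reachable u v) : Sset G u v = {u, v} := by
  refine subset_antisymm ?_ (Set.insert_subset (left_mem_Sset hr.symm)
    (Set.singleton_subset_iff.mpr (right_mem_Sset hr)))
  rintro z (⟨p, hp, hu⟩ | ⟨p, hp, hv⟩)
  · exact Or.inl (h.2.1.eq_of_mem_support p hp hu)
  · exact Or.inr (h.2.2.eq_of_mem_support p hp hv)

lemma IsSRF.one_le_add_of_MMD {g : V → ℝ} (hg : IsSRF G g) (h : MMD G u v)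
    (hr : G.Reachable u v) : 1 ≤ g u + g v := by
  simpa only [Sset_eq_pair_of_MMD h hr, finsum_mem_pair h.1] using hg.2 u v h.1

lemma isSRF_one [Finite V] (hG : G.Connected) : IsSRF G 1 := by
  refine ⟨fun _ => ⟨zero_le_one, le_rfl⟩, fun x y _ => ?_⟩
  have hx : x ∈ (Sset G x y).toFinite.toFinset :=
    (Set.Finite.mem_toFinset _).mpr (left_mem_Sset (hG.preconnected y x))
  rw [finsum_mem_eq_finite_toFinset_sum _ (Sset G x y).toFinite]
  exact Finset.single_le_sum (f := 1) (fun _ _ => zero_le_one) hx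

lemma le_sdimf [Finite V] (hG : G.Connected) {c : ℝ}
    (h : ∀ g : V → ℝ, IsSRF G g → c ≤ ∑ᶠ v, g v) : c ≤ sdimf G :=
  le_csInf ⟨_, 1, isSRF_one hG, rfl⟩ fun _ ⟨g, hg, hs⟩ => hs ▸ h g hg

lemma exists_isMatching_ncard_edgeSet_eq_matchNum [Finite V] (G : SimpleGraph V) :
    ∃ M : G.Subgraph, M.IsMatching ∧ M.edgeSet.ncard = matchNum G := by
  have hbot : (⊥ : G.Subgraph).IsMatching := fun _ hv => hv.elim
  have hbdd : BddAbove {n | ∃ M : G.Subgraph, M.IsMatching ∧ M.edgeSet.ncard = n} :=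
    ⟨Nat.card (Sym2 V), by rintro _ ⟨M, -, rfl⟩; exact Set.ncard_le_card _⟩
  exact Nat.sSup_mem (s := {n | ∃ M : G.Subgraph, M.IsMatching ∧ M.edgeSet.ncard = n})
    ⟨0, ⊥, hbot, by simp⟩ hbdd

lemma Subgraph.IsMatching.pairwiseDisjoint_toFinset [DecidableEq V] {M : G.Subgraph}
    (hM : M.IsMatching) : M.edgeSet.PairwiseDisjoint Sym2.toFinset := by
  intro e₁ he₁ e₂ he₂ hne
  refine Finset.disjoint_left.mpr fun x hx₁ hx₂ => hne ?_
  obtain ⟨a, rfl⟩ := Sym2.mem_iff_exists.mp (Sym2.mem_toFinset.mp hx₁)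
  obtain ⟨b, rfl⟩ := Sym2.mem_iff_exists.mp (Sym2.mem_toFinset.mp hx₂)
  rw [hM.eq_of_adj_left (Subgraph.mem_edgeSet.mp he₁) (Subgraph.mem_edgeSet.mp he₂)]

/-- Weak LP duality between matchings and fractional vertex covers. -/
theorem Subgraph.IsMatching.ncard_edgeSet_le_sum [Fintype V] {M : G.Subgraph}
    (hM : M.IsMatching) {f : V → ℝ} (hf : ∀ v, 0 ≤ f v)
    (hcover : ∀ ⦃a b⦄, M.Adj a b → 1 ≤ f a + f b) :
    (M.edgeSet.ncard : ℝ) ≤ ∑ v, f v := by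
  classical
  set E := M.edgeSet.toFinite.toFinset
  have hedge : ∀ e ∈ E, 1 ≤ ∑ v ∈ e.toFinset, f v := by
    intro e he
    induction e using Sym2.inductionOn with
    | hf a b =>
      have hab : M.Adj a b := Subgraph.mem_edgeSet.mp ((Set.Finite.mem_toFinset _).mp he)
      rw [Sym2.toFinset_mk_eq, Finset.sum_pair (M.adj_sub hab).ne]
      exact hcover hab
  have hdisj : (E : Set (Sym2 V)).PairwiseDisjoint Sym2.toFinset := by
    simpa only [E, Set.Finite.coe_toFinset] using hM.pairwiseDisjoint_toFinset
  calc (M.edgeSet.ncard : ℝ) = ∑ _e ∈ E, 1 := by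
        rw [Set.ncard_eq_toFinset_card _ M.edgeSet.toFinite]
        simp [E]
    _ ≤ ∑ e ∈ E, ∑ v ∈ e.toFinset, f v := Finset.sum_le_sum hedge
    _ = ∑ v ∈ E.biUnion Sym2.toFinset, f v := (Finset.sum_biUnion hdisj).symm
    _ ≤ ∑ v, f v := Finset.sum_le_sum_of_subset_of_nonneg (Finset.subset_univ _)
        fun v _ _ => hf v

end SimpleGraph

/-- For any connected graph `G`,
`sdim_f(G) ≥ ν(G_SR)`. -/
theorem sdimf_ge_matchNum_SRGraph {V : Type*} [Fintype V] (G : SimpleGraph V)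
    (hG : G.Connected) :
    (matchNum (SRGraph G) : ℝ) ≤ sdimf G := by
  obtain ⟨M, hM, hcard⟩ := exists_isMatching_ncard_edgeSet_eq_matchNum (SRGraph G)
  rw [← hcard]
  refine le_sdimf hG fun g hg => ?_
  rw [finsum_eq_sum_of_fintype]
  exact hM.ncard_edgeSet_le_sum (fun v => (hg.1 v).1)
    fun a b hab => hg.one_le_add_of_MMD (M.adj_sub hab) (hG.preconnected a b)
end

section
/- Let G be a connected graph. If the strong resolving graph G_SR contains a regular graph as a subgraph with the same vertex set V(G_SR) (i.e., a spanning regular subgraph of degree at least 1), then sdim_f(G) = |M(G)|/2. -/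
open SimpleGraph

/-!
Mutually maximally distant vertices `u, v` satisfy `S{u,v} = {u,v}`, so every strong resolving
function has `g u + g v ≥ 1` along each edge of `G_SR`. Conversely every `S{x,y}` contains an MMD
pair (extend a geodesic through `x` and `y` at both ends as far as possible), so `1/2` on `M(G)`
is a strong resolving function. Summing `g u + g v ≥ 1` over the edges of an `r`-regular spanning
subgraph `K` of `G_SR` gives `r · |M(G)| = Σ_v deg_K v ≤ 2 Σ_v deg_K v · g v ≤ 2r · g(V)`.
-/

section

variable {V : Type*} {G : SimpleGraph V}

theorem SimpleGraph.Connected.exists_walk_length_eq_dist_mem_support_iff (hG : G.Connected)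
    {a b c : V} :
    (∃ p : G.Walk a c, p.length = G.dist a c ∧ b ∈ p.support) ↔
      G.dist a c = G.dist a b + G.dist b c := by
  classical
  constructor
  · rintro ⟨p, hp, hb⟩
    have hsplit := congrArg Walk.length (p.take_spec hb)
    rw [Walk.length_append] at hsplit
    have := dist_le (p.takeUntil b hb)
    have := dist_le (p.dropUntil b hb)
    have := hG.dist_triangle (u := a) (v := b) (w := c)
    omega
  · intro h
    obtain ⟨p, hp⟩ := hG.exists_walk_length_eq_dist a b
    obtain ⟨q, hq⟩ := hG.exists_walk_length_eq_dist b c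
    exact ⟨p.append q, by rw [Walk.length_append, hp, hq, h],
      (Walk.mem_support_append_iff _ _).2 (Or.inl p.end_mem_support)⟩

theorem SimpleGraph.Connected.mem_Sset_iff (hG : G.Connected) {x y z : V} :
    z ∈ Sset G x y ↔
      G.dist y z = G.dist y x + G.dist x z ∨ G.dist x z = G.dist x y + G.dist y z := by
  simp only [Sset, Set.mem_ofPred_eq, hG.exists_walk_length_eq_dist_mem_support_iff]

theorem SimpleGraph.Connected.exists_adj_dist_lt (hG : G.Connected) {u z : V} (h : u ≠ z) :
    ∃ w, G.Adj u w ∧ G.dist w z < G.dist u z := by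
  obtain ⟨p, hp⟩ := hG.exists_walk_length_eq_dist u z
  cases p with
  | nil => exact absurd rfl h
  | cons hadj q =>
    refine ⟨_, hadj, ?_⟩
    have := dist_le q
    rw [Walk.length_cons] at hp
    omega

theorem MaxDistFrom.eq_of_dist_eq_add (hG : G.Connected) {u v z : V} (h : MaxDistFrom G u v)
    (hz : G.dist v z = G.dist v u + G.dist u z) : z = u := by
  by_contra hzu
  obtain ⟨w, hadj, hw⟩ := hG.exists_adj_dist_lt (Ne.symm hzu)
  have := h w hadj
  have := hG.dist_triangle (u := v) (v := w) (w := z)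
  rw [G.dist_comm (u := v) (v := w), G.dist_comm (u := v) (v := u)] at *
  omega

theorem Sset_eq_pair_of_MMD (hG : G.Connected) {u v : V} (h : MMD G u v) :
    Sset G u v = {u, v} := by
  ext z
  rw [hG.mem_Sset_iff]
  constructor
  · rintro (hz | hz)
    · exact Or.inl (h.2.1.eq_of_dist_eq_add hG hz)
    · exact Or.inr (h.2.2.eq_of_dist_eq_add hG hz)
  · rintro (rfl | rfl) <;> simp

theorem SimpleGraph.Connected.exists_maxDistFrom_dist_eq_add [Finite V] (hG : G.Connected)
    (x y : V) : ∃ u, G.dist y u = G.dist y x + G.dist x u ∧ MaxDistFrom G u y := by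
  obtain ⟨u, hu, hmax⟩ := Set.exists_max_image {u | G.dist y u = G.dist y x + G.dist x u}
    (G.dist y) (Set.toFinite _) ⟨x, by simp⟩
  refine ⟨u, hu, fun w hadj => ?_⟩
  by_contra! hlt
  -- stepping from `u` away from `y` keeps `x` on a geodesic from `y`
  have hw : G.dist y w = G.dist y x + G.dist x w := by
    have := hG.dist_triangle (u := y) (v := u) (w := w)
    have := hG.dist_triangle (u := x) (v := u) (w := w)
    have := hG.dist_triangle (u := y) (v := x) (w := w)
    have := dist_eq_one_iff_adj.2 hadj
    rw [Set.mem_ofPred_eq] at hu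
    rw [G.dist_comm (u := w), G.dist_comm (u := u)] at hlt
    omega
  have := hmax w hw
  rw [G.dist_comm (u := w), G.dist_comm (u := u)] at hlt
  omega

theorem SimpleGraph.Connected.exists_MMD_mem_Sset [Finite V] (hG : G.Connected) {x y : V}
    (hxy : x ≠ y) : ∃ u v, MMD G u v ∧ u ∈ Sset G x y ∧ v ∈ Sset G x y := by
  obtain ⟨u, hu, hmu⟩ := hG.exists_maxDistFrom_dist_eq_add x y
  obtain ⟨v, hv, hmv⟩ := hG.exists_maxDistFrom_dist_eq_add y u
  have := hG.dist_triangle (u := u) (v := x) (w := v)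
  have := hG.dist_triangle (u := x) (v := y) (w := v)
  have hxv : G.dist x v = G.dist x y + G.dist y v := by
    rw [G.dist_comm (u := y) (v := u), G.dist_comm (u := y) (v := x),
      G.dist_comm (u := x) (v := u)] at hu
    omega
  refine ⟨u, v, ⟨fun huv => hxy ?_, fun w hadj => ?_, hmv⟩,
    hG.mem_Sset_iff.2 (Or.inl hu), hG.mem_Sset_iff.2 (Or.inr hxv)⟩
  · subst huv
    rw [dist_self, G.dist_comm (u := y)] at hv
    have hyu : G.dist u y = 0 := by omega
    rw [hG.dist_eq_zero_iff.1 hyu, dist_self] at hu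
    exact hG.dist_eq_zero_iff.1 (by omega)
  · have := hmu w hadj
    have := hG.dist_triangle (u := w) (v := y) (w := v)
    omega

theorem IsSRF.one_le_add_of_MMD (hG : G.Connected) {g : V → ℝ} (hg : IsSRF G g) {u v : V}
    (h : MMD G u v) : 1 ≤ g u + g v := by
  simpa only [Sset_eq_pair_of_MMD hG h, finsum_mem_pair h.1] using hg.2 u v h.1

theorem MMD.symm {u v : V} (h : MMD G u v) : MMD G v u := ⟨h.1.symm, h.2.2, h.2.1⟩

theorem MMD.mem_Mset {u v : V} (h : MMD G u v) : u ∈ Mset G := ⟨v, h⟩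

theorem isSRF_indicator_Mset_half [Finite V] (hG : G.Connected) :
    IsSRF G ((Mset G).indicator fun _ => 1 / 2) := by
  classical
  refine ⟨fun v => ?_, fun x y hxy => ?_⟩
  · by_cases hv : v ∈ Mset G <;> norm_num [hv]
  obtain ⟨u, v, huv, hu, hv⟩ := hG.exists_MMD_mem_Sset hxy
  have hfin := (Sset G x y).toFinite
  have hpair : ({u, v} : Finset V) ⊆ hfin.toFinset := by
    simp [Set.insert_subset_iff, hu, hv]
  calc (1 : ℝ) = ∑ z ∈ {u, v}, (Mset G).indicator (fun _ => 1 / 2) z := by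
        rw [Finset.sum_pair huv.1, Set.indicator_of_mem huv.mem_Mset,
          Set.indicator_of_mem huv.symm.mem_Mset]
        norm_num
    _ ≤ ∑ᶠ z ∈ Sset G x y, (Mset G).indicator (fun _ => 1 / 2) z := by
        rw [finsum_mem_eq_finite_toFinset_sum _ hfin]
        exact Finset.sum_le_sum_of_subset_of_nonneg hpair fun z _ _ =>
          Set.indicator_nonneg (fun _ _ => by norm_num) z

theorem sum_indicator_const_eq_ncard_mul [Fintype V] (s : Set V) (c : ℝ) :
    ∑ v, s.indicator (fun _ => c) v = s.ncard * c := by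
  classical
  simp [Set.indicator_apply, Finset.sum_ite, Set.ncard_eq_toFinset_card']

theorem SimpleGraph.sum_degree_le_two_mul_sum_degree_mul [Fintype V] (K : SimpleGraph V)
    [DecidableRel K.Adj] {g : V → ℝ} (hg : ∀ u v, K.Adj u v → 1 ≤ g u + g v) :
    ∑ v, (K.degree v : ℝ) ≤ 2 * ∑ v, K.degree v * g v := by
  have hswap : ∑ v, ∑ w ∈ K.neighborFinset v, g w = ∑ v, ∑ w ∈ K.neighborFinset v, g v :=
    Finset.sum_comm' fun v w => by simp [K.adj_comm]
  calc ∑ v, (K.degree v : ℝ) = ∑ v, ∑ w ∈ K.neighborFinset v, (1 : ℝ) := by simp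
    _ ≤ ∑ v, ∑ w ∈ K.neighborFinset v, (g v + g w) :=
        Finset.sum_le_sum fun v _ => Finset.sum_le_sum fun w hw => hg v w (by simpa using hw)
    _ = 2 * ∑ v, K.degree v * g v := by
        simp only [Finset.sum_add_distrib, hswap, Finset.sum_const, nsmul_eq_mul,
          card_neighborFinset_eq_degree]
        ring

theorem SimpleGraph.ncard_support_le_two_mul_sum [Fintype V] (K : SimpleGraph V) {r : ℕ}
    (hr : 0 < r) (hreg : ∀ v ∈ K.support, (K.neighborSet v).ncard = r) {g : V → ℝ}
    (hg₀ : ∀ v, 0 ≤ g v) (hg : ∀ u v, K.Adj u v → 1 ≤ g u + g v) :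
    (K.support.ncard : ℝ) ≤ 2 * ∑ v, g v := by
  classical
  have hdeg : ∀ v, (K.degree v : ℝ) = K.support.indicator (fun _ => (r : ℝ)) v := by
    intro v
    by_cases hv : v ∈ K.support
    · rw [Set.indicator_of_mem hv, ← hreg v hv, ← card_neighborSet_eq_degree,
        Set.ncard_eq_toFinset_card', Set.toFinset_card]
    · rw [Set.indicator_of_notMem hv, (K.degree_eq_zero_iff_notMem_support v).2 hv, Nat.cast_zero]
  have hsum : ∑ v, (K.degree v : ℝ) = r * K.support.ncard := by
    rw [Finset.sum_congr rfl fun v _ => hdeg v, sum_indicator_const_eq_ncard_mul, mul_comm]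
  have hle : ∑ v, (K.degree v : ℝ) * g v ≤ r * ∑ v, g v := by
    rw [Finset.mul_sum]
    refine Finset.sum_le_sum fun v _ => mul_le_mul_of_nonneg_right ?_ (hg₀ v)
    rw [hdeg]
    exact Set.indicator_le_self' (fun _ _ => by positivity) v
  have := K.sum_degree_le_two_mul_sum_degree_mul hg
  have hscaled : (r : ℝ) * K.support.ncard ≤ r * (2 * ∑ v, g v) := by linarith
  exact le_of_mul_le_mul_left hscaled (by exact_mod_cast hr)

end

/-- If `G_SR` contains a spanning regular subgraph of degree `r ≥ 1`
(on the vertex set `V(G_SR) = M(G)`), then `sdim_f(G) = |M(G)|/2`. -/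
theorem sdimf_eq_half_Mset_of_spanning_regular_subgraph {V : Type*} [Fintype V]
    (G : SimpleGraph V) (hG : G.Connected)
    (K : SimpleGraph V) (hKsub : K ≤ SRGraph G) (hKspan : K.support = Mset G)
    (r : ℕ) (hr : 1 ≤ r) (hKreg : ∀ v ∈ Mset G, (K.neighborSet v).ncard = r) :
    sdimf G = ((Mset G).ncard : ℝ) / 2 := by
  refine IsLeast.csInf_eq ⟨⟨_, isSRF_indicator_Mset_half hG, ?_⟩, ?_⟩
  · rw [finsum_eq_sum_of_fintype, sum_indicator_const_eq_ncard_mul]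
    ring
  · rintro _ ⟨g, hg, rfl⟩
    have hbound := K.ncard_support_le_two_mul_sum hr (hKspan ▸ hKreg) (fun v => (hg.1 v).1)
      fun u v huv => hg.one_le_add_of_MMD hG (hKsub huv)
    rw [hKspan] at hbound
    rw [finsum_eq_sum_of_fintype]
    linarith
end

section
/- For any two connected graphs G and H (each of order at least two), sdim_f(G □ H) ≤ |M(G)| · |M(H)| / 2. -/
open SimpleGraph

/-!
A vertex `u` that is maximally distant from some `v ≠ u` lies in `M(G)`: a vertex `z` from which
`u` is maximally distant, chosen as far from `u` as possible, is maximally distant from `u`.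
Prolonging a geodesic from `x` through `y` as long as possible, and one from `y` through `x`,
gives two distinct vertices of `M(G) ∩ S{x,y}`, so weight `1/2` on `M(G)` is a strong resolving
function and `sdim_f(G) ≤ |M(G)|/2`. In `G □ H` distances add coordinatewise, so maximal distance
passes to both factors and `M(G □ H) ⊆ M(G) × M(H)`.
-/

namespace SimpleGraph

variable {V W : Type*} {G : SimpleGraph V} {H : SimpleGraph W} {u v w x y z : V}

lemma dist_le_dist_add_one_of_adj (h : G.Adj v w) (u : V) : G.dist u w ≤ G.dist u v + 1 := by
  simpa [dist_eq_one_iff_adj.mpr h] using h.reachable.dist_triangle_right u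

lemma Walk.dist_add_dist_of_mem_support {p : G.Walk x z} (hp : p.length = G.dist x z)
    (hy : y ∈ p.support) : G.dist x y + G.dist y z = G.dist x z := by
  obtain ⟨q, r, rfl⟩ := Walk.mem_support_iff_exists_append.mp hy
  have hq := dist_le q
  have hr := dist_le r
  have hxz := Reachable.dist_triangle_left ⟨q⟩ z
  rw [Walk.length_append] at hp
  omega

lemma Preconnected.not_maxDistFrom_self [Nontrivial V] (hG : G.Preconnected) (u : V) :
    ¬ MaxDistFrom G u u := by
  intro h
  obtain ⟨w, hw⟩ := hG.exists_adj_of_nontrivial u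
  have hwu := h w hw
  rw [dist_self, Nat.le_zero, dist_eq_zero_iff_eq_or_not_reachable] at hwu
  exact hwu.elim hw.ne' (· hw.symm.reachable)

lemma Connected.exists_maxDistFrom_geodesic_through [Finite V] (hG : G.Connected) (x y : V) :
    ∃ z, MaxDistFrom G z x ∧ ∃ p : G.Walk x z, p.length = G.dist x z ∧ y ∈ p.support := by
  let T := {w | ∃ p : G.Walk x w, p.length = G.dist x w ∧ y ∈ p.support}
  have hyT : y ∈ T := by
    obtain ⟨p, hp⟩ := hG.exists_walk_length_eq_dist x y
    exact ⟨p, hp, p.end_mem_support⟩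
  obtain ⟨z, ⟨p, hp, hyp⟩, hz⟩ := T.exists_max_image (G.dist x) T.toFinite ⟨y, hyT⟩
  refine ⟨z, fun w hzw => not_lt.mp fun hlt => ?_, p, hp, hyp⟩
  rw [dist_comm (u := z), dist_comm (u := w)] at hlt
  have hxw := dist_le_dist_add_one_of_adj hzw x
  have hwT : w ∈ T := ⟨p.concat hzw, by rw [Walk.length_concat]; omega, by simp [hyp]⟩
  exact (hz w hwT).not_gt hlt

lemma Connected.mem_Mset_of_maxDistFrom [Finite V] (hG : G.Connected) (huv : u ≠ v)
    (h : MaxDistFrom G u v) : u ∈ Mset G := by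
  let T := {w | MaxDistFrom G u w}
  obtain ⟨z, hzT, hz⟩ := T.exists_max_image (G.dist u) T.toFinite ⟨v, h⟩
  have huz : u ≠ z := by
    rintro rfl
    have := hz v h
    rw [dist_self, Nat.le_zero, hG.dist_eq_zero_iff] at this
    exact huv this
  refine ⟨z, huz, hzT, fun w hzw => not_lt.mp fun hlt => ?_⟩
  rw [dist_comm (u := z), dist_comm (u := w)] at hlt
  -- `u` would be maximally distant from `w`, which is farther from `u` than `z`
  have hwT : w ∈ T := fun t hut => by
    have := dist_le_dist_add_one_of_adj hzw t
    have := hzT t hut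
    omega
  exact (hz w hwT).not_gt hlt

lemma Connected.exists_mem_Mset_geodesic_through [Finite V] (hG : G.Connected) (hxy : x ≠ y) :
    ∃ z ∈ Mset G, ∃ p : G.Walk x z, p.length = G.dist x z ∧ y ∈ p.support := by
  obtain ⟨z, hz, p, hp, hyp⟩ := hG.exists_maxDistFrom_geodesic_through x y
  refine ⟨z, hG.mem_Mset_of_maxDistFrom ?_ hz, p, hp, hyp⟩
  rintro rfl
  have := Walk.dist_add_dist_of_mem_support hp hyp
  rw [dist_self, dist_comm (u := y)] at this
  exact hxy (hG.dist_eq_zero_iff.mp (by omega))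

lemma Connected.isSRF_indicator_Mset [Finite V] (hG : G.Connected) :
    IsSRF G ((Mset G).indicator fun _ => 1 / 2) := by
  refine ⟨fun v => ?_, fun x y hxy => ?_⟩
  · by_cases hv : v ∈ Mset G <;> norm_num [hv]
  obtain ⟨z, hzM, p, hp, hyp⟩ := hG.exists_mem_Mset_geodesic_through hxy
  obtain ⟨z', hzM', p', hp', hxp'⟩ := hG.exists_mem_Mset_geodesic_through hxy.symm
  have hzz' : z ≠ z' := by
    rintro rfl
    have := Walk.dist_add_dist_of_mem_support hp hyp
    have := Walk.dist_add_dist_of_mem_support hp' hxp'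
    have := dist_comm (G := G) (u := x) (v := y)
    exact hxy (hG.dist_eq_zero_iff.mp (by omega))
  have hsub : {z, z'} ⊆ Sset G x y := by
    rintro t (rfl | rfl)
    exacts [Or.inr ⟨p, hp, hyp⟩, Or.inl ⟨p', hp', hxp'⟩]
  rw [← finsum_mem_add_sdiff hsub (Set.toFinite _), finsum_mem_pair hzz']
  have htail : 0 ≤ ∑ᶠ t ∈ Sset G x y \ {z, z'}, (Mset G).indicator (fun _ => (1 / 2 : ℝ)) t :=
    finsum_nonneg fun t => finsum_nonneg fun _ => Set.indicator_nonneg (by norm_num) t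
  simp only [Set.indicator_of_mem hzM, Set.indicator_of_mem hzM']
  linarith

lemma sdimf_le_finsum {g : V → ℝ} (hg : IsSRF G g) : sdimf G ≤ ∑ᶠ v, g v :=
  csInf_le ⟨0, by rintro _ ⟨g, hg, rfl⟩; exact finsum_nonneg fun v => (hg.1 v).1⟩ ⟨g, hg, rfl⟩

lemma Connected.sdimf_le_ncard_Mset_div_two [Finite V] (hG : G.Connected) :
    sdimf G ≤ (Mset G).ncard / 2 := by
  refine (sdimf_le_finsum hG.isSRF_indicator_Mset).trans_eq ?_
  rw [← finsum_mem_def, finsum_mem_eq_finite_toFinset_sum _ (Set.toFinite _), Finset.sum_const,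
    ← Set.ncard_eq_toFinset_card]
  simp [div_eq_mul_inv]

lemma Connected.dist_boxProd (hG : G.Connected) (hH : H.Connected) (a b : V × W) :
    (G.boxProd H).dist a b = G.dist a.1 b.1 + H.dist a.2 b.2 := by
  rw [dist, edist_boxProd, ENat.toNat_add (edist_ne_top_iff_reachable.mpr (hG a.1 b.1))
    (edist_ne_top_iff_reachable.mpr (hH a.2 b.2))]
  rfl

lemma MaxDistFrom.boxProd_fst (hG : G.Connected) (hH : H.Connected) {a b : V × W}
    (h : MaxDistFrom (G.boxProd H) a b) : MaxDistFrom G a.1 b.1 := fun w hw => by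
  have := h (w, a.2) (boxProd_adj.mpr (Or.inl ⟨hw, rfl⟩))
  rw [hG.dist_boxProd hH, hG.dist_boxProd hH] at this
  exact Nat.le_of_add_le_add_right this

lemma MaxDistFrom.boxProd_snd (hG : G.Connected) (hH : H.Connected) {a b : V × W}
    (h : MaxDistFrom (G.boxProd H) a b) : MaxDistFrom H a.2 b.2 := fun w hw => by
  have := h (a.1, w) (boxProd_adj.mpr (Or.inr ⟨hw, rfl⟩))
  rw [hG.dist_boxProd hH, hG.dist_boxProd hH] at this
  exact Nat.le_of_add_le_add_left this

lemma Mset_boxProd_subset [Nontrivial V] [Nontrivial W] (hG : G.Connected) (hH : H.Connected) :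
    Mset (G.boxProd H) ⊆ Mset G ×ˢ Mset H := by
  rintro a ⟨b, -, hab, hba⟩
  refine ⟨⟨b.1, fun h => ?_, hab.boxProd_fst hG hH, hba.boxProd_fst hG hH⟩,
    ⟨b.2, fun h => ?_, hab.boxProd_snd hG hH, hba.boxProd_snd hG hH⟩⟩
  · exact hG.preconnected.not_maxDistFrom_self _ (h ▸ hab.boxProd_fst hG hH)
  · exact hH.preconnected.not_maxDistFrom_self _ (h ▸ hab.boxProd_snd hG hH)

end SimpleGraph

/-- For any two connected graphs `G` and `H` of order at least two,
`sdim_f(G □ H) ≤ |M(G)|·|M(H)|/2`. -/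
theorem sdimf_boxProd_le_half_Msets {V W : Type*} [Fintype V] [Fintype W]
    (G : SimpleGraph V) (H : SimpleGraph W)
    (hG : G.Connected) (hH : H.Connected)
    (hn : 2 ≤ Fintype.card V) (hm : 2 ≤ Fintype.card W) :
    sdimf (G.boxProd H) ≤ ((Mset G).ncard : ℝ) * ((Mset H).ncard : ℝ) / 2 := by
  have : Nontrivial V := Fintype.one_lt_card_iff_nontrivial.mp hn
  have : Nontrivial W := Fintype.one_lt_card_iff_nontrivial.mp hm
  calc sdimf (G.boxProd H) ≤ (Mset (G.boxProd H)).ncard / 2 :=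
        (hG.boxProd hH).sdimf_le_ncard_Mset_div_two
    _ ≤ (Mset G ×ˢ Mset H).ncard / 2 := by
        gcongr (?_ : ℕ) / _
        exact Set.ncard_le_ncard (Mset_boxProd_subset hG hH)
    _ = ((Mset G).ncard : ℝ) * ((Mset H).ncard : ℝ) / 2 := by
        rw [Set.ncard_prod, Nat.cast_mul]
end
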